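/- The multiplication ⋆ restricted to the subspace T spanned by e₁, e₂, e₃ is commutative: for all x, y ∈ T, x ⋆ y = y ⋆ x. -/
import Mathlib


open Matrix

/-- The seven matrices `A₁,…,A₇` over `F₂ = ZMod 2` (indexed by `Fin 7`). -/
def A : Fin 7 → Matrix (Fin 7) (Fin 7) (ZMod 2)
  | 0 => 1
  | 1 => !![0,0,1,0,0,0,0; 1,0,1,0,0,0,0; 0,1,0,0,0,0,0; 0,0,0,1,1,1,1;
            0,0,0,1,0,1,0; 0,0,0,0,0,1,1; 0,0,0,0,0,1,0]
  | 2 => !![0,1,0,0,0,0,0; 0,1,1,0,0,0,0; 1,0,1,0,0,0,0; 0,0,0,0,1,0,0;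
            0,0,0,1,1,0,0; 0,0,0,1,1,1,1; 0,0,0,1,0,1,0]
  | 3 => !![0,0,0,1,1,0,0; 0,0,0,1,1,1,0; 0,0,0,0,1,0,1; 1,0,0,0,0,0,1;
            0,0,1,0,0,1,0; 0,1,1,1,0,1,1; 0,0,0,1,1,0,1]
  | 4 => !![0,0,0,0,1,0,0; 0,0,0,0,1,1,1; 0,0,0,1,0,1,0; 0,0,1,0,0,1,1;
            1,0,1,0,0,0,1; 0,0,0,0,1,1,0; 0,1,1,1,0,1,1]
  | 5 => !![0,0,0,1,0,1,1; 0,0,0,1,1,0,0; 0,0,0,0,1,0,0; 0,0,0,1,0,1,0;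
            0,1,1,1,1,1,1; 1,0,1,0,1,1,0; 0,0,1,1,0,1,1]
  | 6 => !![0,0,0,1,1,0,1; 0,0,0,0,1,0,0; 0,0,0,1,0,0,0; 0,1,1,0,1,0,1;
            0,1,1,1,0,1,0; 0,0,1,1,1,0,1; 1,0,0,0,1,1,0]

/-- The multiplication `x ⋆ y = (∑ i, xᵢ Aᵢ) ·ᵥ y` on `V = F₂⁷`. -/
def star (x y : Fin 7 → ZMod 2) : Fin 7 → ZMod 2 := (∑ i, x i • A i) *ᵥ y

/-- The standard basis vectors of `V = F₂⁷`. -/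
def e (i : Fin 7) : Fin 7 → ZMod 2 := Pi.single i 1

lemma gen_comm : ∀ i ∈ ({0,1,2} : Set (Fin 7)), ∀ j ∈ ({0,1,2} : Set (Fin 7)),
    star (e i) (e j) = star (e j) (e i) := by decide

lemma star_add_left (x x' y : Fin 7 → ZMod 2) :
    star (x + x') y = star x y + star x' y := by
  unfold _root_.star
  have : (∑ i, (x + x') i • A i) = (∑ i, x i • A i) + ∑ i, x' i • A i := by
    rw [← Finset.sum_add_distrib]
    exact Finset.sum_congr rfl fun i _ => by rw [Pi.add_apply, add_smul]
  rw [this, add_mulVec]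

lemma star_smul_left (a : ZMod 2) (x y : Fin 7 → ZMod 2) :
    star (a • x) y = a • star x y := by
  unfold _root_.star
  have : (∑ i, (a • x) i • A i) = a • ∑ i, x i • A i := by
    rw [Finset.smul_sum]
    exact Finset.sum_congr rfl fun i _ => by rw [Pi.smul_apply, smul_eq_mul, mul_smul]
  rw [this, smul_mulVec]

lemma star_zero_left (y : Fin 7 → ZMod 2) : star 0 y = 0 := by
  unfold _root_.star; simp

lemma star_add_right (x y y' : Fin 7 → ZMod 2) :
    star x (y + y') = star x y + star x y' := by
  unfold _root_.star; rw [mulVec_add]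

lemma star_smul_right (a : ZMod 2) (x y : Fin 7 → ZMod 2) :
    star x (a • y) = a • star x y := by
  unfold _root_.star; rw [mulVec_smul]

lemma star_zero_right (x : Fin 7 → ZMod 2) : star x 0 = 0 := by
  unfold _root_.star; simp

theorem stmt_7 :
    ∀ x y : Fin 7 → ZMod 2,
      x ∈ Submodule.span (ZMod 2) {e 0, e 1, e 2} →
      y ∈ Submodule.span (ZMod 2) {e 0, e 1, e 2} →
      star x y = star y x := by
  intro x y hx hy
  induction hx using Submodule.span_induction with
  | mem x hxm =>
    induction hy using Submodule.span_induction with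
    | mem y hym =>
      obtain ⟨i, hi, rfl⟩ : ∃ i ∈ ({0,1,2} : Set (Fin 7)), e i = x := by
        rcases hxm with h|h|h <;> [exact ⟨0, by simp, h.symm⟩;
          exact ⟨1, by simp, h.symm⟩; exact ⟨2, by simp, h.symm⟩]
      obtain ⟨j, hj, rfl⟩ : ∃ j ∈ ({0,1,2} : Set (Fin 7)), e j = y := by
        rcases hym with h|h|h <;> [exact ⟨0, by simp, h.symm⟩;
          exact ⟨1, by simp, h.symm⟩; exact ⟨2, by simp, h.symm⟩]
      exact gen_comm i hi j hj
    | zero => rw [star_zero_left, star_zero_right]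
    | add y y' _ _ h1 h2 => rw [star_add_left, star_add_right, h1, h2]
    | smul a y _ h1 => rw [star_smul_left, star_smul_right, h1]
  | zero => rw [star_zero_left, star_zero_right]
  | add x x' _ _ h1 h2 => rw [star_add_left, star_add_right, h1, h2]
  | smul a x _ h1 => rw [star_smul_left, star_smul_right, h1]
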